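/- Let MB_n be the modified bubble-sort graph with n ≥ 6. For every subset S ⊆ V(MB_n) with |S| = 4, the neighborhood N(S) satisfies |N(S)| ≥ 4n - 9, and this bound is attained: there exists S with |S| = 4 and |N(S)| = 4n - 9. -/

import Mathlib

/-- The modified bubble-sort graph: the Cayley graph of `Sym(n)` generated by the
transpositions `(12),(23),…,((n-1)n),(n1)` (positions taken mod `n`). -/
def MB (n : ℕ) : SimpleGraph (Equiv.Perm (Fin n)) :=
  SimpleGraph.fromRel fun g h =>
    ∃ i : Fin n, h = g * Equiv.swap i ⟨(i.val + 1) % n, Nat.mod_lt _ i.pos⟩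
/-- `N(S)`: vertices outside `S` adjacent to some vertex of `S`. -/
def setNbhd {V : Type*} (G : SimpleGraph V) (S : Set V) : Set V :=
  {w | w ∉ S ∧ ∃ v ∈ S, G.Adj v w}

/-!
Write `N v` for the neighbourhood of `v`. The graph `MB n` is `n`-regular and bipartite (by sign).
Comparing the points `x` with `σ x = x + 1` shows that `σ = gen p * gen q ≠ 1` has at most one
other factorisation into two generators, namely `gen q * gen p` when these commute. Hence distinct
vertices have at most two common neighbours, and exactly two only when they differ by a product of
disjoint generators. If `x, y` and `y, z` each have two common neighbours and `x, z` have one, then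
`x, y, z` have a common neighbour: otherwise a product of two double transpositions with four
distinct indices, which moves at least five points, would equal some `gen p * gen q`, which moves
at most four.

By inclusion–exclusion these facts bound `#(N a ∪ N b ∪ ⋯)` from below for up to four vertices.
Splitting `S` by colour into `T ⊔ T'` gives `N(S) = (N(T) \ T') ⊔ (N(T') \ T)`, and each of the
colour patterns `4 + 0`, `3 + 1`, `2 + 2` gives `#N(S) ≥ 4n - 9`. Equality holds for
`S = {1, gen 0, gen 2, gen 4}`.
-/

open Finset

namespace Finset

variable {α : Type*} [DecidableEq α]

theorem card_union_union_add_card_inter (A B C : Finset α) :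
    #(A ∪ B ∪ C) + #(A ∩ B) + #(A ∩ C) + #(B ∩ C) = #A + #B + #C + #(A ∩ B ∩ C) := by
  have hAB := card_union_add_card_inter A B
  have hABC := card_union_add_card_inter (A ∪ B) C
  have hACBC := card_union_add_card_inter (A ∩ C) (B ∩ C)
  rw [union_inter_distrib_right] at hABC
  rw [show A ∩ C ∩ (B ∩ C) = A ∩ B ∩ C by ext; simp] at hACBC
  omega

theorem card_union_union_union_add_card_inter (A B C D : Finset α) :
    #(A ∪ B ∪ C ∪ D) + #(A ∩ B) + #(A ∩ C) + #(A ∩ D) + #(B ∩ C) + #(B ∩ D) + #(C ∩ D) +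
        #(A ∩ B ∩ C ∩ D) =
      #A + #B + #C + #D + #(A ∩ B ∩ C) + #(A ∩ B ∩ D) + #(A ∩ C ∩ D) + #(B ∩ C ∩ D) := by
  have hABC := card_union_union_add_card_inter A B C
  have hABCD := card_union_add_card_inter (A ∪ B ∪ C) D
  have hD := card_union_union_add_card_inter (A ∩ D) (B ∩ D) (C ∩ D)
  rw [union_inter_distrib_right, union_inter_distrib_right] at hABCD
  rw [show A ∩ D ∩ (B ∩ D) = A ∩ B ∩ D by ext; simp,
    show A ∩ D ∩ (C ∩ D) = A ∩ C ∩ D by ext; simp,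
    show B ∩ D ∩ (C ∩ D) = B ∩ C ∩ D by ext; simp,
    show A ∩ B ∩ D ∩ (C ∩ D) = A ∩ B ∩ C ∩ D by ext; simp] at hD
  omega

end Finset

namespace SimpleGraph

variable {V : Type*} {G : SimpleGraph V}

theorem color_eq_not_of_adj (C : G.Coloring Bool) {v w : V} (h : G.Adj v w) : C w = !C v :=
  Bool.eq_not_of_ne (C.valid h).symm

variable [Fintype V] [DecidableEq V] [DecidableRel G.Adj] {n : ℕ}

variable (G) in
def CommonNeighborsLeTwo : Prop :=
  ∀ u v, u ≠ v → #(G.neighborFinset u ∩ G.neighborFinset v) ≤ 2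

variable (G) in
def SquaresShareNeighbor : Prop :=
  ∀ x y z, x ≠ y → y ≠ z → x ≠ z →
    2 ≤ #(G.neighborFinset x ∩ G.neighborFinset y) →
    2 ≤ #(G.neighborFinset y ∩ G.neighborFinset z) →
    0 < #(G.neighborFinset x ∩ G.neighborFinset z) →
    0 < #(G.neighborFinset x ∩ G.neighborFinset y ∩ G.neighborFinset z)

theorem two_mul_le_card_union_neighborFinset (hreg : G.IsRegularOfDegree n)
    (hpair : G.CommonNeighborsLeTwo) {x y : V} (hxy : x ≠ y) :
    2 * n ≤ #(G.neighborFinset x ∪ G.neighborFinset y) + 2 := by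
  have hIE := card_union_add_card_inter (G.neighborFinset x) (G.neighborFinset y)
  have := hpair x y hxy
  simp only [card_neighborFinset_eq_degree, hreg.degree_eq] at hIE
  omega

theorem three_mul_add_card_inter_le_card_union_neighborFinset (hreg : G.IsRegularOfDegree n)
    (hpair : G.CommonNeighborsLeTwo) {x y z : V} (hxy : x ≠ y) (hxz : x ≠ z) (hyz : y ≠ z) :
    3 * n + #(G.neighborFinset x ∩ G.neighborFinset y ∩ G.neighborFinset z) ≤
      #(G.neighborFinset x ∪ G.neighborFinset y ∪ G.neighborFinset z) + 6 := by
  have hIE := card_union_union_add_card_inter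
    (G.neighborFinset x) (G.neighborFinset y) (G.neighborFinset z)
  have := hpair x y hxy
  have := hpair x z hxz
  have := hpair y z hyz
  simp only [card_neighborFinset_eq_degree, hreg.degree_eq] at hIE
  omega

theorem card_inter_add_card_inter_add_card_inter_le (hpair : G.CommonNeighborsLeTwo)
    (hshare : G.SquaresShareNeighbor) {x y z : V} (hxy : x ≠ y) (hxz : x ≠ z) (hyz : y ≠ z) :
    #(G.neighborFinset x ∩ G.neighborFinset y) + #(G.neighborFinset x ∩ G.neighborFinset z) +
        #(G.neighborFinset y ∩ G.neighborFinset z) ≤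
      4 + 2 * #(G.neighborFinset x ∩ G.neighborFinset y ∩ G.neighborFinset z) := by
  have hy := hshare x y z hxy hyz hxz
  have hx := hshare y x z hxy.symm hxz hyz
  have hz := hshare x z y hxz hyz.symm hxy
  simp only [inter_comm (G.neighborFinset y) (G.neighborFinset x),
    inter_comm (G.neighborFinset z) (G.neighborFinset y), inter_right_comm _ (G.neighborFinset z)]
    at hx hz
  have := hpair x y hxy
  have := hpair x z hxz
  have := hpair y z hyz
  -- a sum above `4` needs two of the counts to be `2` and the third to be positive
  grind

theorem four_mul_le_card_union_neighborFinset (hreg : G.IsRegularOfDegree n)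
    (hpair : G.CommonNeighborsLeTwo) (hshare : G.SquaresShareNeighbor) {a b c d : V}
    (hab : a ≠ b) (hac : a ≠ c) (had : a ≠ d) (hbc : b ≠ c) (hbd : b ≠ d) (hcd : c ≠ d) :
    4 * n ≤ #(G.neighborFinset a ∪ G.neighborFinset b ∪ G.neighborFinset c ∪
      G.neighborFinset d) + 9 := by
  have hIE := card_union_union_union_add_card_inter
    (G.neighborFinset a) (G.neighborFinset b) (G.neighborFinset c) (G.neighborFinset d)
  simp only [card_neighborFinset_eq_degree, hreg.degree_eq] at hIE
  have := card_inter_add_card_inter_add_card_inter_le hpair hshare hab hac hbc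
  have := card_inter_add_card_inter_add_card_inter_le hpair hshare hab had hbd
  have := card_inter_add_card_inter_add_card_inter_le hpair hshare hac had hcd
  have := card_inter_add_card_inter_add_card_inter_le hpair hshare hbc hbd hcd
  have := hpair a b hab
  have := hpair a c hac
  have := hpair a d had
  have := hpair b c hbc
  have := hpair b d hbd
  have := hpair c d hcd
  set A := G.neighborFinset a
  set B := G.neighborFinset b
  set C := G.neighborFinset c
  set D := G.neighborFinset d
  have : #(A ∩ B ∩ C ∩ D) ≤ #(A ∩ B ∩ C) := card_le_card inter_subset_left
  have : #(A ∩ B ∩ C ∩ D) ≤ #(A ∩ B ∩ D) := card_le_card (by intro; simp_all)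
  have : #(A ∩ B ∩ C ∩ D) ≤ #(A ∩ C ∩ D) := card_le_card (by intro; simp_all)
  have : #(A ∩ B ∩ C ∩ D) ≤ #(B ∩ C ∩ D) := card_le_card (by intro; simp_all)
  -- With `P, T, Q` the sums over pairs, triples and the quadruple, the defect `4n - #(A ∪ ⋯)` is
  -- `P - T + Q`. If `Q = 0`, summing the four triangle bounds gives `P ≤ 8 + T`; if `Q > 0`,
  -- then `T ≥ 4Q` and `P ≤ 12`.
  omega

theorem card_biUnion_union_sdiff (C : G.Coloring Bool) {T T' : Finset V} {b : Bool}
    (hT : ∀ v ∈ T, C v = b) (hT' : ∀ v ∈ T', C v = !b) :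
    #((T ∪ T').biUnion (G.neighborFinset ·) \ (T ∪ T')) =
      #(T.biUnion (G.neighborFinset ·) \ T') + #(T'.biUnion (G.neighborFinset ·) \ T) := by
  have hX : ∀ w ∈ T.biUnion (G.neighborFinset ·), C w = !b := by
    simp only [mem_biUnion, mem_neighborFinset]
    rintro w ⟨v, hv, hvw⟩
    rw [color_eq_not_of_adj C hvw, hT v hv]
  have hY : ∀ w ∈ T'.biUnion (G.neighborFinset ·), C w = b := by
    simp only [mem_biUnion, mem_neighborFinset]
    rintro w ⟨v, hv, hvw⟩
    rw [color_eq_not_of_adj C hvw, hT' v hv, Bool.not_not]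
  rw [union_biUnion, ← card_union_of_disjoint]
  · congr 1
    ext w
    have := hX w
    have := hY w
    have := hT w
    have := hT' w
    simp only [mem_sdiff, mem_union]
    cases b <;> grind
  · rw [Finset.disjoint_left]
    intro w hwX hwY
    have := (hX w (mem_sdiff.1 hwX).1).symm.trans (hY w (mem_sdiff.1 hwY).1)
    cases b <;> simp at this

theorem four_mul_le_card_sdiff_add_card_sdiff_of_card_eq_three (hreg : G.IsRegularOfDegree n)
    (hpair : G.CommonNeighborsLeTwo) {T : Finset V} (hT : #T = 3) (o : V) :
    4 * n ≤ #(T.biUnion (G.neighborFinset ·) \ {o}) + #(G.neighborFinset o \ T) + 9 := by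
  obtain ⟨x, y, z, hxy, hxz, hyz, rfl⟩ := card_eq_three.1 hT
  simp only [biUnion_insert, singleton_biUnion, ← union_assoc]
  have hU := three_mul_add_card_inter_le_card_union_neighborFinset hreg hpair hxy hxz hyz
  have hUo := card_le_card_sdiff_add_card
    (s := G.neighborFinset x ∪ G.neighborFinset y ∪ G.neighborFinset z) (t := {o})
  have hNo := card_sdiff_add_card_inter (G.neighborFinset o) {x, y, z}
  rw [card_neighborFinset_eq_degree, hreg.degree_eq] at hNo
  -- `#(N o ∩ {x, y, z}) = 3` makes `o` a common neighbour of `x, y, z`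
  have hk : #(G.neighborFinset o ∩ {x, y, z}) ≤
      2 + #(G.neighborFinset x ∩ G.neighborFinset y ∩ G.neighborFinset z) := by
    by_cases hsub : {x, y, z} ⊆ G.neighborFinset o
    · have hmem : o ∈ G.neighborFinset x ∩ G.neighborFinset y ∩ G.neighborFinset z := by
        simp only [insert_subset_iff, singleton_subset_iff, mem_neighborFinset] at hsub
        simp [hsub.1.symm, hsub.2.1.symm, hsub.2.2.symm]
      have := card_pos.2 ⟨o, hmem⟩
      have := card_le_card (inter_subset_right (s₁ := G.neighborFinset o) (s₂ := {x, y, z}))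
      omega
    · have := card_lt_card (s := G.neighborFinset o ∩ {x, y, z}) (t := {x, y, z})
        ⟨inter_subset_right, fun h => hsub (h.trans inter_subset_left)⟩
      omega
  simp only [card_singleton] at hUo
  omega

theorem four_mul_le_card_sdiff_add_card_sdiff (hreg : G.IsRegularOfDegree n)
    (hpair : G.CommonNeighborsLeTwo) (hshare : G.SquaresShareNeighbor) {T T' : Finset V}
    (hcard : #T + #T' = 4) :
    4 * n ≤
      #(T.biUnion (G.neighborFinset ·) \ T') + #(T'.biUnion (G.neighborFinset ·) \ T) + 9 := by
  wlog hle : #T' ≤ #T generalizing T T'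
  · have := this (T := T') (T' := T) (by omega) (by omega)
    omega
  obtain h4 | h3 | h2 : #T = 4 ∨ #T = 3 ∨ #T = 2 := by omega
  · obtain rfl : T' = ∅ := card_eq_zero.1 (by omega)
    obtain ⟨a, T₀, haT₀, rfl, hT₀⟩ := card_eq_succ.1 h4
    obtain ⟨b, c, d, hbc, hbd, hcd, rfl⟩ := card_eq_three.1 hT₀
    simp only [mem_insert, mem_singleton, not_or] at haT₀
    have := four_mul_le_card_union_neighborFinset hreg hpair hshare haT₀.1 haT₀.2.1 haT₀.2.2
      hbc hbd hcd
    simpa [biUnion_insert, ← union_assoc] using this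
  · obtain ⟨o, rfl⟩ := card_eq_one.1 (by omega : #T' = 1)
    simpa using four_mul_le_card_sdiff_add_card_sdiff_of_card_eq_three hreg hpair h3 o
  · have hU (X : Finset V) (hX : #X = 2) : 2 * n ≤ #(X.biUnion (G.neighborFinset ·)) + 2 := by
      obtain ⟨x, y, hxy, rfl⟩ := card_eq_two.1 hX
      simpa using two_mul_le_card_union_neighborFinset hreg hpair hxy
    have := hU T h2
    have := hU T' (by omega)
    have := card_le_card_sdiff_add_card (s := T.biUnion (G.neighborFinset ·)) (t := T')
    have := card_le_card_sdiff_add_card (s := T'.biUnion (G.neighborFinset ·)) (t := T)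
    omega

theorem four_mul_le_card_biUnion_sdiff (C : G.Coloring Bool) (hreg : G.IsRegularOfDegree n)
    (hpair : G.CommonNeighborsLeTwo) (hshare : G.SquaresShareNeighbor) {S : Finset V}
    (hS : #S = 4) :
    4 * n ≤ #(S.biUnion (G.neighborFinset ·) \ S) + 9 := by
  have hsplit := card_filter_add_card_filter_not (s := S) (fun v => C v = true)
  rw [← filter_union_filter_not_eq (fun v => C v = true) S,
    card_biUnion_union_sdiff C (b := true) (fun v hv => (mem_filter.1 hv).2)
      (fun v hv => by simpa using (mem_filter.1 hv).2)]
  exact four_mul_le_card_sdiff_add_card_sdiff hreg hpair hshare (by omega)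

end SimpleGraph

theorem setNbhd_coe_finset {V : Type*} [Fintype V] [DecidableEq V] (G : SimpleGraph V)
    [DecidableRel G.Adj] (S : Finset V) :
    setNbhd G ↑S = ↑(S.biUnion (G.neighborFinset ·) \ S) := by
  ext w
  simp [setNbhd, and_comm]

open Equiv Fin.CommRing

namespace Fin

variable {n : ℕ} [NeZero n]

theorem add_natCast_ne_self {c : ℕ} (hc : 0 < c) (hcn : c < n) (i : Fin n) : i + c ≠ i := by
  rw [Ne, add_eq_left, natCast_eq_zero]
  exact Nat.not_dvd_of_pos_of_lt hc hcn

theorem add_one_ne_self (hn : 2 ≤ n) (i : Fin n) : i + 1 ≠ i := by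
  simpa using add_natCast_ne_self (c := 1) Nat.one_pos (by omega) i

end Fin

namespace MB

noncomputable instance {n : ℕ} : DecidableRel (MB n).Adj := Classical.decRel _

variable {n : ℕ} [NeZero n]

def gen (i : Fin n) : Perm (Fin n) := swap i (i + 1)

/-- `gen i` and `gen j` are disjoint transpositions. -/
def Far (i j : Fin n) : Prop := i ≠ j ∧ i ≠ j + 1 ∧ j ≠ i + 1

theorem gen_apply_self (i : Fin n) : gen i i = i + 1 := swap_apply_left _ _

theorem gen_apply_add_one (i : Fin n) : gen i (i + 1) = i := swap_apply_right _ _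

theorem gen_apply_of_ne {i x : Fin n} (h : x ≠ i) (h' : x ≠ i + 1) : gen i x = x :=
  swap_apply_of_ne_of_ne h h'

theorem gen_mul_self (i : Fin n) : gen i * gen i = 1 := swap_mul_self _ _

theorem gen_mul_gen_mul (i : Fin n) (σ : Perm (Fin n)) : gen i * (gen i * σ) = σ := by
  rw [← mul_assoc, gen_mul_self, one_mul]

theorem gen_inv (i : Fin n) : (gen i)⁻¹ = gen i := swap_inv _ _

theorem gen_ne_one (hn : 2 ≤ n) (i : Fin n) : gen i ≠ 1 :=
  fun h => Fin.add_one_ne_self hn i (swap_eq_one_iff.1 h).symm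

theorem sign_gen (hn : 2 ≤ n) (i : Fin n) : Perm.sign (gen i) = -1 :=
  Perm.sign_swap (Fin.add_one_ne_self hn i).symm

theorem gen_apply_eq_add_one_iff (hn : 3 ≤ n) {i x : Fin n} : gen i x = x + 1 ↔ x = i := by
  refine ⟨fun h => ?_, fun h => h ▸ gen_apply_self i⟩
  by_contra hxi
  by_cases hx : x = i + 1
  · subst hx
    rw [gen_apply_add_one] at h
    exact Fin.add_natCast_ne_self (c := 2) two_pos (by omega) i
      (by push_cast; linear_combination -h)
  · rw [gen_apply_of_ne hxi hx] at h
    exact Fin.add_one_ne_self (by omega) x h.symm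

theorem gen_injective (hn : 3 ≤ n) : Function.Injective (gen (n := n)) := fun i _ h =>
  (gen_apply_eq_add_one_iff hn).1 (h ▸ gen_apply_self i)

theorem commute_gen_of_far {i j : Fin n} (h : Far i j) : gen i * gen j = gen j * gen i := by
  refine (Perm.Disjoint.commute fun x => ?_).eq
  by_cases hx : x = i ∨ x = i + 1
  · right
    rcases hx with rfl | rfl
    · exact gen_apply_of_ne h.1 h.2.1
    · exact gen_apply_of_ne h.2.2.symm fun h' => h.1 (add_right_cancel h')
  · rw [not_or] at hx
    exact Or.inl (gen_apply_of_ne hx.1 hx.2)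

theorem inv_gen_mul_gen_of_far {i j : Fin n} (h : Far i j) : (gen i * gen j)⁻¹ = gen i * gen j := by
  rw [mul_inv_rev, gen_inv, gen_inv, commute_gen_of_far h]

theorem gen_mul_gen_apply_eq_add_one_iff (hn : 4 ≤ n) {k l x : Fin n} (hkl : k ≠ l) :
    (gen k * gen l) x = x + 1 ↔ (x = k ∨ x = l) ∧ k ≠ l + 1 := by
  rw [Perm.mul_apply]
  by_cases hxl : x = l
  · subst hxl
    rw [gen_apply_self]
    refine ⟨fun h => ⟨Or.inr rfl, fun hk => ?_⟩, fun h => gen_apply_of_ne (Ne.symm h.2) ?_⟩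
    · rw [hk, gen_apply_self] at h
      exact Fin.add_one_ne_self (by omega) _ h
    · exact fun h' => hkl (add_right_cancel h').symm
  by_cases hxl' : x = l + 1
  · subst hxl'
    rw [gen_apply_add_one]
    refine iff_of_false (fun h => ?_) (fun h => ?_)
    · by_cases hlk : l = k + 1
      · subst hlk
        rw [gen_apply_add_one] at h
        exact Fin.add_natCast_ne_self (c := 3) three_pos (by omega) k
          (by push_cast; linear_combination -h)
      · rw [gen_apply_of_ne hkl.symm hlk] at h
        exact Fin.add_natCast_ne_self (c := 2) two_pos (by omega) l
          (by push_cast; linear_combination -h)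
    · rcases h with ⟨h | h, h'⟩
      · exact h' h.symm
      · exact Fin.add_one_ne_self (by omega) _ h
  · rw [gen_apply_of_ne hxl hxl', gen_apply_eq_add_one_iff (by omega)]
    exact ⟨fun h => ⟨Or.inl h, h ▸ hxl'⟩, fun h => h.1.resolve_right hxl⟩

theorem eq_of_gen_mul_gen_eq_of_ne_add_one (hn : 4 ≤ n) {p q p' q' : Fin n} (hpq : p ≠ q)
    (hp'q' : p' ≠ q') (h : gen p * gen q = gen p' * gen q') (hpp' : p ≠ p') (hp : p ≠ q + 1) :
    p' = q ∧ q' = p ∧ q ≠ p + 1 := by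
  have hasc (x : Fin n) : (x = p ∨ x = q) ∧ p ≠ q + 1 ↔ (x = p' ∨ x = q') ∧ p' ≠ q' + 1 := by
    rw [← gen_mul_gen_apply_eq_add_one_iff hn hpq, h, gen_mul_gen_apply_eq_add_one_iff hn hp'q']
  have hp' := hasc p
  have hq' := hasc q
  grind

theorem eq_of_gen_mul_gen_eq (hn : 4 ≤ n) {p q p' q' : Fin n} (hpq : p ≠ q)
    (h : gen p * gen q = gen p' * gen q') (hpp' : p ≠ p') : p' = q ∧ q' = p ∧ Far p q := by
  have hp'q' : p' ≠ q' := by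
    rintro rfl
    rw [gen_mul_self, mul_eq_one_iff_eq_inv, gen_inv] at h
    exact hpq (gen_injective (by omega) h)
  by_cases hp : p = q + 1
  · -- `gen (q + 1) * gen q` has no point `x ↦ x + 1`, so argue with the inverses
    exfalso
    have h' : gen q * gen p = gen q' * gen p' := by
      simpa [gen_inv] using congrArg (·⁻¹) h
    by_cases hqq' : q = q'
    · subst hqq'
      exact hpp' (gen_injective (by omega) (mul_right_cancel h))
    · refine (eq_of_gen_mul_gen_eq_of_ne_add_one hn hpq.symm hp'q'.symm h' hqq' fun hq => ?_).2.2 hp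
      exact Fin.add_natCast_ne_self (c := 2) two_pos (by omega) q
        (by push_cast; linear_combination -hq - hp)
  · obtain ⟨h₁, h₂, h₃⟩ := eq_of_gen_mul_gen_eq_of_ne_add_one hn hpq hp'q' h hpp' hp
    exact ⟨h₁, h₂, hpq, hp, h₃⟩

theorem gen_mul_gen_apply_ne_of_far (hn : 4 ≤ n) {i j k l y : Fin n} (hij : Far i j)
    (hkl : Far k l) (hy : y = i ∨ y = j) (hyk : y ≠ k) (hyl : y ≠ l) :
    (gen i * gen j) y ≠ (gen k * gen l) y ∧
      (gen i * gen j) (y + 1) ≠ (gen k * gen l) (y + 1) := by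
  have hA : (gen i * gen j) y = y + 1 := (gen_mul_gen_apply_eq_add_one_iff hn hij.1).2 ⟨hy, hij.2.1⟩
  have hB : (gen k * gen l) y ≠ y + 1 := fun h => by
    obtain ⟨h | h, -⟩ := (gen_mul_gen_apply_eq_add_one_iff hn hkl.1).1 h <;> contradiction
  refine ⟨fun h => hB (h ▸ hA), fun h => hB ?_⟩
  have hA' : (gen i * gen j) (y + 1) = y := by
    rw [← inv_gen_mul_gen_of_far hij]
    exact (Perm.eq_inv_iff_eq.2 hA).symm
  rw [← inv_gen_mul_gen_of_far hkl]
  exact (Perm.eq_inv_iff_eq.2 (h ▸ hA')).symm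

theorem mem_of_gen_mul_gen_apply_ne {p q x : Fin n} (h : (gen p * gen q) x ≠ x) :
    x ∈ ({p, p + 1, q, q + 1} : Finset (Fin n)) := by
  contrapose! h
  simp only [mem_insert, mem_singleton, not_or] at h
  rw [Perm.mul_apply, gen_apply_of_ne h.2.2.1 h.2.2.2, gen_apply_of_ne h.1 h.2.1]

theorem eq_add_one_of_mem_of_add_one_mem (hn : 3 ≤ n) {i j m : Fin n} (hij : Far i j)
    (hmi : m ≠ i) (hmj : m ≠ j) (hm : m ∈ ({i, i + 1, j, j + 1} : Finset (Fin n)))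
    (hm' : m + 1 ∈ ({i, i + 1, j, j + 1} : Finset (Fin n))) :
    (m = i + 1 ∧ j = i + 1 + 1) ∨ (m = j + 1 ∧ i = j + 1 + 1) := by
  simp only [mem_insert, mem_singleton] at hm hm'
  rcases hm with rfl | rfl | rfl | rfl
  · exact absurd rfl hmi
  · rcases hm' with h | h | h | h
    · exact absurd (by push_cast; linear_combination h)
        (Fin.add_natCast_ne_self (c := 2) two_pos (by omega) i)
    · exact absurd h (Fin.add_one_ne_self (by omega) _)
    · exact Or.inl ⟨rfl, h.symm⟩
    · exact absurd (add_right_cancel h).symm hij.2.2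
  · exact absurd rfl hmj
  · rcases hm' with h | h | h | h
    · exact Or.inr ⟨rfl, h.symm⟩
    · exact absurd (add_right_cancel h).symm hij.2.1
    · exact absurd (by push_cast; linear_combination h)
        (Fin.add_natCast_ne_self (c := 2) two_pos (by omega) j)
    · exact absurd h (Fin.add_one_ne_self (by omega) _)

theorem five_le_card (hn : 5 ≤ n) {i j k l : Fin n} (hij : Far i j) (hkl : k ≠ l) (hik : i ≠ k)
    (hil : i ≠ l) (hjk : j ≠ k) (hjl : j ≠ l) :
    5 ≤ #({i, i + 1, j, j + 1, k, k + 1, l, l + 1} : Finset (Fin n)) := by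
  set P : Finset (Fin n) := {i, i + 1, j, j + 1}
  have hP : #P = 4 := by
    have := Fin.add_one_ne_self (by omega) i
    have := Fin.add_one_ne_self (by omega) j
    have : i + 1 ≠ j + 1 := fun h => hij.1 (add_right_cancel h)
    have := hij.2.2
    simp [P, card_insert_of_notMem, *, hij.1, hij.2.1, Ne.symm]
  by_contra! hlt
  have hPM : P = {i, i + 1, j, j + 1, k, k + 1, l, l + 1} :=
    eq_of_subset_of_card_le (by simp [P, insert_subset_iff]) (by omega)
  have hmem (m : Fin n) (hm : m ∈ ({k, k + 1, l, l + 1} : Finset (Fin n))) : m ∈ P := by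
    rw [hPM]
    simp only [mem_insert, mem_singleton] at hm
    rcases hm with rfl | rfl | rfl | rfl <;> simp
  rcases eq_add_one_of_mem_of_add_one_mem (by omega) hij hik.symm hjk.symm (hmem k (by simp))
    (hmem (k + 1) (by simp)) with ⟨rfl, hj⟩ | ⟨rfl, hi⟩ <;>
  rcases eq_add_one_of_mem_of_add_one_mem (by omega) hij hil.symm hjl.symm (hmem l (by simp))
    (hmem (l + 1) (by simp)) with ⟨rfl, hj'⟩ | ⟨rfl, hi'⟩
  · exact hkl rfl
  · exact Fin.add_natCast_ne_self (c := 4) (by norm_num) (by omega) i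
      (by push_cast; linear_combination -hi' - hj)
  · exact Fin.add_natCast_ne_self (c := 4) (by norm_num) (by omega) i
      (by push_cast; linear_combination -hi - hj')
  · exact hkl rfl

theorem gen_mul_gen_mul_ne (hn : 5 ≤ n) {i j k l : Fin n} (hij : Far i j) (hkl : Far k l)
    (hik : i ≠ k) (hil : i ≠ l) (hjk : j ≠ k) (hjl : j ≠ l) (p q : Fin n) :
    gen i * gen j * (gen k * gen l) ≠ gen p * gen q := by
  intro h
  -- every point of `{i, i+1, j, j+1, k, k+1, l, l+1}` is moved, but `gen p * gen q` moves at
  -- most four points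
  have hmoved (x : Fin n) (hx : (gen i * gen j) x ≠ (gen k * gen l) x) :
      x ∈ ({p, p + 1, q, q + 1} : Finset (Fin n)) := by
    refine mem_of_gen_mul_gen_apply_ne fun hfix => hx ?_
    rw [← h, Perm.mul_apply, ← Perm.eq_inv_iff_eq, inv_gen_mul_gen_of_far hij] at hfix
    exact hfix.symm
  have hsub : ({i, i + 1, j, j + 1, k, k + 1, l, l + 1} : Finset (Fin n)) ⊆
      {p, p + 1, q, q + 1} := by
    intro x hx
    simp only [mem_insert, mem_singleton] at hx
    apply hmoved
    rcases hx with rfl | rfl | rfl | rfl | rfl | rfl | rfl | rfl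
    · exact (gen_mul_gen_apply_ne_of_far (by omega) hij hkl (Or.inl rfl) hik hil).1
    · exact (gen_mul_gen_apply_ne_of_far (by omega) hij hkl (Or.inl rfl) hik hil).2
    · exact (gen_mul_gen_apply_ne_of_far (by omega) hij hkl (Or.inr rfl) hjk hjl).1
    · exact (gen_mul_gen_apply_ne_of_far (by omega) hij hkl (Or.inr rfl) hjk hjl).2
    · exact (gen_mul_gen_apply_ne_of_far (by omega) hkl hij (Or.inl rfl) hik.symm hjk.symm).1.symm
    · exact (gen_mul_gen_apply_ne_of_far (by omega) hkl hij (Or.inl rfl) hik.symm hjk.symm).2.symm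
    · exact (gen_mul_gen_apply_ne_of_far (by omega) hkl hij (Or.inr rfl) hil.symm hjl.symm).1.symm
    · exact (gen_mul_gen_apply_ne_of_far (by omega) hkl hij (Or.inr rfl) hil.symm hjl.symm).2.symm
  have := card_le_card hsub
  have := card_le_four (a := p) (b := p + 1) (c := q) (d := q + 1)
  have := five_le_card hn hij hkl.1 hik hil hjk hjl
  omega

theorem swap_eq_gen (i : Fin n) : swap i ⟨(i.val + 1) % n, Nat.mod_lt _ i.pos⟩ = gen i := by
  rw [gen]
  congr 1
  exact Fin.ext (by simp [Fin.val_add])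

theorem adj_iff (hn : 2 ≤ n) {u v : Perm (Fin n)} : (MB n).Adj u v ↔ ∃ i, v = u * gen i := by
  simp only [MB, SimpleGraph.fromRel_adj, swap_eq_gen]
  constructor
  · rintro ⟨-, ⟨i, rfl⟩ | ⟨i, rfl⟩⟩
    · exact ⟨i, rfl⟩
    · exact ⟨i, by rw [mul_assoc, gen_mul_self, mul_one]⟩
  · rintro ⟨i, rfl⟩
    exact ⟨fun h => gen_ne_one hn i (by simpa using h.symm), Or.inl ⟨i, rfl⟩⟩

theorem mem_neighborFinset_iff (hn : 2 ≤ n) {u v : Perm (Fin n)} :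
    v ∈ (MB n).neighborFinset u ↔ ∃ i, v = u * gen i := by
  rw [SimpleGraph.mem_neighborFinset, adj_iff hn]

theorem isRegularOfDegree (hn : 3 ≤ n) : (MB n).IsRegularOfDegree n := fun u => by
  have : (MB n).neighborFinset u = univ.image (u * gen ·) := by
    ext v
    simp [mem_neighborFinset_iff (n := n) (by omega), eq_comm]
  rw [← SimpleGraph.card_neighborFinset_eq_degree, this,
    card_image_of_injective _ fun i j h => gen_injective hn (mul_left_cancel h), card_univ,
    Fintype.card_fin]

def signColoring (hn : 2 ≤ n) : (MB n).Coloring Bool :=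
  SimpleGraph.Coloring.mk (fun σ => decide (Perm.sign σ = 1)) fun {u v} h => by
    obtain ⟨i, rfl⟩ := (adj_iff hn).1 h
    rw [map_mul, sign_gen hn]
    rcases Int.units_eq_one_or (Perm.sign u) with h | h <;> simp [h]

theorem signColoring_apply (hn : 2 ≤ n) (σ : Perm (Fin n)) :
    signColoring hn σ = decide (Perm.sign σ = 1) := rfl

theorem exists_eq_mul_gen_of_mem_inter (hn : 2 ≤ n) {u v w : Perm (Fin n)}
    (hw : w ∈ (MB n).neighborFinset u ∩ (MB n).neighborFinset v) :
    ∃ p q, w = u * gen p ∧ v = u * (gen p * gen q) := by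
  simp only [mem_inter, mem_neighborFinset_iff hn] at hw
  obtain ⟨⟨p, rfl⟩, q, hq⟩ := hw
  exact ⟨p, q, rfl, by rw [← mul_assoc, hq, mul_assoc, gen_mul_self, mul_one]⟩

theorem exists_far_of_mem_inter (hn : 4 ≤ n) {u v w w' : Perm (Fin n)} (huv : u ≠ v)
    (hw : w ∈ (MB n).neighborFinset u ∩ (MB n).neighborFinset v)
    (hw' : w' ∈ (MB n).neighborFinset u ∩ (MB n).neighborFinset v) (hww' : w ≠ w') :
    ∃ p q, Far p q ∧ w = u * gen p ∧ w' = u * gen q ∧ v = u * (gen p * gen q) := by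
  obtain ⟨p, q, rfl, rfl⟩ := exists_eq_mul_gen_of_mem_inter (by omega) hw
  obtain ⟨p', q', rfl, hv⟩ := exists_eq_mul_gen_of_mem_inter (by omega) hw'
  have hpq : p ≠ q := by
    rintro rfl
    rw [gen_mul_self, mul_one] at huv
    exact huv rfl
  have hpp' : p ≠ p' := by
    rintro rfl
    exact hww' rfl
  obtain ⟨rfl, -, hfar⟩ := eq_of_gen_mul_gen_eq hn hpq (mul_left_cancel hv) hpp'
  exact ⟨p, p', hfar, rfl, rfl, rfl⟩

theorem commonNeighborsLeTwo (hn : 4 ≤ n) : (MB n).CommonNeighborsLeTwo := by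
  intro u v huv
  by_contra! h
  obtain ⟨w₁, h₁, w₂, h₂, w₃, h₃, h₁₂, h₁₃, h₂₃⟩ := two_lt_card.1 h
  obtain ⟨p, q, -, rfl, rfl, hv⟩ := exists_far_of_mem_inter hn huv h₁ h₂ h₁₂
  obtain ⟨p', q', -, hp, rfl, hv'⟩ := exists_far_of_mem_inter hn huv h₁ h₃ h₁₃
  obtain rfl := gen_injective (by omega) (mul_left_cancel hp)
  rw [hv, mul_left_cancel_iff, mul_left_cancel_iff] at hv'
  exact h₂₃ (by rw [hv'])

theorem mul_gen_mem_inter_inter (hn : 2 ≤ n) (x : Perm (Fin n)) (a s b : Fin n) :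
    x * gen a ∈ (MB n).neighborFinset x ∩ (MB n).neighborFinset (x * (gen a * gen s)) ∩
      (MB n).neighborFinset (x * (gen a * gen s) * (gen s * gen b)) := by
  simp only [mem_inter, mem_neighborFinset_iff hn]
  exact ⟨⟨⟨a, rfl⟩, s, by simp [mul_assoc, gen_mul_self]⟩, b,
    by simp [mul_assoc, gen_mul_gen_mul, gen_mul_self]⟩

theorem squaresShareNeighbor (hn : 5 ≤ n) : (MB n).SquaresShareNeighbor := by
  intro x y z hxy hyz _ h₁ h₂ h₃
  obtain ⟨w₁, hw₁, w₂, hw₂, hw₁₂⟩ := one_lt_card.1 h₁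
  obtain ⟨i, j, hij, -, -, rfl⟩ := exists_far_of_mem_inter (by omega) hxy hw₁ hw₂ hw₁₂
  obtain ⟨w₃, hw₃, w₄, hw₄, hw₃₄⟩ := one_lt_card.1 h₂
  obtain ⟨k, l, hkl, -, -, rfl⟩ := exists_far_of_mem_inter (by omega) hyz hw₃ hw₄ hw₃₄
  obtain ⟨w, hw⟩ := card_pos.1 h₃
  obtain ⟨p, q, -, hpq⟩ := exists_eq_mul_gen_of_mem_inter (by omega) hw
  suffices ∃ a s b, gen i * gen j = gen a * gen s ∧ gen k * gen l = gen s * gen b by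
    obtain ⟨a, s, b, hy, hz⟩ := this
    rw [hy, hz]
    exact card_pos.2 ⟨_, mul_gen_mem_inter_inter (by omega) x a s b⟩
  by_cases hik : i = k
  · exact ⟨j, i, l, commute_gen_of_far hij, by rw [hik]⟩
  by_cases hil : i = l
  · exact ⟨j, i, k, commute_gen_of_far hij, by rw [commute_gen_of_far hkl, hil]⟩
  by_cases hjk : j = k
  · exact ⟨i, j, l, rfl, by rw [hjk]⟩
  by_cases hjl : j = l
  · exact ⟨i, j, k, rfl, by rw [commute_gen_of_far hkl, hjl]⟩
  rw [mul_assoc] at hpq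
  exact absurd (mul_left_cancel hpq) (gen_mul_gen_mul_ne hn hij hkl hik hil hjk hjl p q)

theorem four_mul_le_card_biUnion_sdiff (hn : 5 ≤ n) {S : Finset (Perm (Fin n))} (hS : #S = 4) :
    4 * n ≤ #(S.biUnion ((MB n).neighborFinset ·) \ S) + 9 :=
  (MB n).four_mul_le_card_biUnion_sdiff (signColoring (by omega)) (isRegularOfDegree (by omega))
    (commonNeighborsLeTwo (by omega)) (squaresShareNeighbor hn) hS

theorem far_add_natCast {c : ℕ} (hc : 2 ≤ c) (hcn : c + 2 ≤ n) (i : Fin n) : Far i (i + c) := by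
  refine ⟨fun h => Fin.add_natCast_ne_self (by omega) (by omega) i h.symm,
    fun h => Fin.add_natCast_ne_self (c := c + 1) (by omega) (by omega) i
      (by push_cast; linear_combination -h),
    fun h => Fin.add_natCast_ne_self (c := c - 1) (by omega) (by omega) (i + 1) ?_⟩
  push_cast [Nat.cast_sub (by omega : 1 ≤ c)]
  linear_combination h

theorem exists_far_far_far (hn : 6 ≤ n) : ∃ a b c : Fin n, Far a b ∧ Far a c ∧ Far b c := by
  have h02 := far_add_natCast (n := n) (c := 2) le_rfl (by omega) 0
  have h04 := far_add_natCast (n := n) (c := 4) (by norm_num) (by omega) 0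
  have h24 := far_add_natCast (n := n) (c := 2) le_rfl (by omega) (0 + (2 : ℕ))
  rw [add_assoc, ← Nat.cast_add] at h24
  exact ⟨_, _, _, h02, h04, h24⟩

theorem two_le_card_inter_of_far (hn : 3 ≤ n) {a b : Fin n} (h : Far a b) :
    2 ≤ #((MB n).neighborFinset (gen a) ∩ (MB n).neighborFinset (gen b)) := by
  have hne : (1 : Perm (Fin n)) ≠ gen a * gen b := fun h' => by
    rw [eq_comm, mul_eq_one_iff_eq_inv, gen_inv] at h'
    exact h.1 (gen_injective hn h')
  rw [← card_pair hne]
  refine card_le_card fun w hw => ?_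
  simp only [mem_insert, mem_singleton] at hw
  simp only [mem_inter, mem_neighborFinset_iff (n := n) (by omega)]
  rcases hw with rfl | rfl
  · exact ⟨⟨a, (gen_mul_self a).symm⟩, b, (gen_mul_self b).symm⟩
  · exact ⟨⟨b, rfl⟩, a, commute_gen_of_far h⟩

theorem inter_inter_subset_one (hn : 4 ≤ n) {a b c : Fin n} (hab : a ≠ b) (hac : a ≠ c)
    (hbc : b ≠ c) :
    (MB n).neighborFinset (gen a) ∩ (MB n).neighborFinset (gen b) ∩
      (MB n).neighborFinset (gen c) ⊆ {1} := by
  intro w hw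
  simp only [mem_inter, mem_neighborFinset_iff (n := n) (by omega)] at hw
  obtain ⟨⟨⟨p, rfl⟩, q, hq⟩, r, hr⟩ := hw
  by_cases hap : a = p
  · simp [hap, gen_mul_self]
  obtain ⟨rfl, -⟩ := eq_of_gen_mul_gen_eq hn hap hq hab
  exact absurd (eq_of_gen_mul_gen_eq hn hap hr hac).1 hbc.symm

theorem card_union_neighborFinset_gen_add_five_le (hn : 4 ≤ n) {a b c : Fin n} (hab : Far a b)
    (hac : Far a c) (hbc : Far b c) :
    #((MB n).neighborFinset (gen a) ∪ (MB n).neighborFinset (gen b) ∪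
      (MB n).neighborFinset (gen c)) + 5 ≤ 3 * n := by
  have hIE := card_union_union_add_card_inter ((MB n).neighborFinset (gen a))
    ((MB n).neighborFinset (gen b)) ((MB n).neighborFinset (gen c))
  simp only [SimpleGraph.card_neighborFinset_eq_degree,
    (isRegularOfDegree (n := n) (by omega)).degree_eq] at hIE
  have := two_le_card_inter_of_far (by omega) hab
  have := two_le_card_inter_of_far (by omega) hac
  have := two_le_card_inter_of_far (by omega) hbc
  have := card_le_card (inter_inter_subset_one hn hab.1 hac.1 hbc.1)
  rw [card_singleton] at this
  omega

theorem exists_card_biUnion_sdiff_le (hn : 6 ≤ n) :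
    ∃ S : Finset (Perm (Fin n)), #S = 4 ∧
      #(S.biUnion ((MB n).neighborFinset ·) \ S) + 9 ≤ 4 * n := by
  obtain ⟨a, b, c, hab, hac, hbc⟩ := exists_far_far_far hn
  have hinj := gen_injective (n := n) (by omega)
  have hT : #({gen a, gen b, gen c} : Finset (Perm (Fin n))) = 3 :=
    card_eq_three.2 ⟨_, _, _, hinj.ne hab.1, hinj.ne hac.1, hinj.ne hbc.1, rfl⟩
  have hT1 : ({gen a, gen b, gen c} : Finset (Perm (Fin n))) ⊆ (MB n).neighborFinset 1 := by
    simp [insert_subset_iff, mem_neighborFinset_iff (n := n) (by omega)]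
  have h1U : {1} ⊆ (MB n).neighborFinset (gen a) ∪ (MB n).neighborFinset (gen b) ∪
      (MB n).neighborFinset (gen c) := by
    simp only [singleton_subset_iff, mem_union, mem_neighborFinset_iff (n := n) (by omega)]
    exact Or.inl (Or.inl ⟨a, (gen_mul_self a).symm⟩)
  refine ⟨{gen a, gen b, gen c} ∪ {1}, ?_, ?_⟩
  · rw [card_union_of_disjoint (disjoint_singleton_right.2 fun h => ?_), hT, card_singleton]
    simp only [mem_insert, mem_singleton] at h
    rcases h with h | h | h <;> exact gen_ne_one (by omega) _ h.symm
  rw [SimpleGraph.card_biUnion_union_sdiff (signColoring (by omega)) (b := false)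
    (by simp [signColoring_apply, sign_gen (n := n) (by omega)]) (by simp [signColoring_apply])]
  simp only [biUnion_insert, singleton_biUnion, ← union_assoc]
  have hN1 := card_sdiff_of_subset hT1
  have hU1 := card_sdiff_of_subset h1U
  simp only [SimpleGraph.card_neighborFinset_eq_degree,
    (isRegularOfDegree (n := n) (by omega)).degree_eq, card_singleton] at hN1 hU1
  have := card_union_neighborFinset_gen_add_five_le (by omega) hab hac hbc
  omega

end MB

theorem stmt_10 {n : ℕ} (hn : 6 ≤ n) :
    (∀ S : Set (Equiv.Perm (Fin n)), S.ncard = 4 →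
        4 * n - 9 ≤ (setNbhd (MB n) S).ncard) ∧
      ∃ S : Set (Equiv.Perm (Fin n)), S.ncard = 4 ∧
        (setNbhd (MB n) S).ncard = 4 * n - 9 := by
  have : NeZero n := ⟨by omega⟩
  have hlower (S : Set (Equiv.Perm (Fin n))) (hS : S.ncard = 4) :
      4 * n - 9 ≤ (setNbhd (MB n) S).ncard := by
    obtain ⟨F, rfl⟩ := S.toFinite.exists_finset_coe
    rw [Set.ncard_coe_finset] at hS
    have := MB.four_mul_le_card_biUnion_sdiff (by omega) hS
    rw [setNbhd_coe_finset, Set.ncard_coe_finset]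
    omega
  obtain ⟨S, hS, hle⟩ := MB.exists_card_biUnion_sdiff_le hn
  have hS' : (S : Set (Equiv.Perm (Fin n))).ncard = 4 := by rw [Set.ncard_coe_finset, hS]
  refine ⟨hlower, S, hS', le_antisymm ?_ (hlower _ hS')⟩
  rw [setNbhd_coe_finset, Set.ncard_coe_finset]
  omega
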